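/- arXiv:2006.09166 — 3 statements merged into one kernel-verified Lean document; each statement's English description precedes it below -/
import Mathlib

section
/- Every finite 2-connected graph that contains no induced subgraph isomorphic to the claw K_{1,3} and no induced subgraph isomorphic to the paw is Hamiltonian. -/
/-!
Take a longest cycle `C`. One exists because a 2-connected graph is not a forest: for an edge
`aa'` and a third vertex `c`, the paths `a ⟶ c` in `G - a'` and `c ⟶ a'` in `G - a` avoid `aa'`.
If some vertex lies off `C`, connectivity gives an edge `wu` with `w ∉ C` and `u ∈ C`.
Let `x`, `y` be the two neighbours of `u` on `C`. Then `w` is adjacent to neither, since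
otherwise inserting `w` between `u` and `x` (or `y`) gives a longer cycle. Now `{u, w, x, y}`
induces a claw if `xy` is not an edge, and a paw if it is.
-/

open SimpleGraph

/-- The claw `K_{1,3}`: vertex `0` is the centre, adjacent to `1`, `2`, `3`. -/
def claw : SimpleGraph (Fin 4) := SimpleGraph.fromRel (fun a _ => a = 0)

/-- The paw: a triangle on `1, 2, 3` with pendant vertex `0` attached to `1`. -/
def paw : SimpleGraph (Fin 4) :=
  SimpleGraph.fromRel (fun a b => (a = 0 ∧ b = 1) ∨ (a ≠ 0 ∧ b ≠ 0))

/-- `G` is `H`-free: no induced subgraph of `G` is isomorphic to `H`.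
(`H ↪g G` is a graph embedding, i.e. an isomorphism onto an induced subgraph.) -/
def HFree {W V : Type*} (H : SimpleGraph W) (G : SimpleGraph V) : Prop :=
  ¬ Nonempty (H ↪g G)

/-- `G` is 2-connected: at least 3 vertices, connected, and deleting any vertex
leaves it connected. -/
def TwoConnected {V : Type*} (G : SimpleGraph V) : Prop :=
  (∃ a b c : V, a ≠ b ∧ a ≠ c ∧ b ≠ c) ∧ G.Connected ∧
    ∀ v : V, (G.induce {u | u ≠ v}).Connected

/-- The hypothesis that every induced paw of `G`, with pendant vertex `a₁` adjacent
precisely to the triangle vertex `a₀`, satisfies `φ(a₁,b₁)` or `φ(a₁,b₂)`: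
`a₁` has a common neighbour outside the paw with `b₁` or with `b₂`. -/
def PawCondition {V : Type*} (G : SimpleGraph V) : Prop :=
  ∀ a₁ a₀ b₁ b₂ : V,
    G.Adj a₁ a₀ → G.Adj a₀ b₁ → G.Adj a₀ b₂ → G.Adj b₁ b₂ →
    ¬ G.Adj a₁ b₁ → ¬ G.Adj a₁ b₂ → a₁ ≠ b₁ → a₁ ≠ b₂ →
    ∃ x, x ∉ ({a₁, a₀, b₁, b₂} : Set V) ∧ G.Adj x a₁ ∧ (G.Adj x b₁ ∨ G.Adj x b₂)

/-- A ray (one-way infinite path) in `G`, given by its sequence of vertices. -/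
def IsRay {V : Type*} (G : SimpleGraph V) (f : ℕ → V) : Prop :=
  Function.Injective f ∧ ∀ n, G.Adj (f n) (f (n + 1))

/-- Two rays are equivalent (belong to the same end) if no finite vertex set
separates them. -/
def EndEquiv {V : Type*} (G : SimpleGraph V) (f g : ℕ → V) : Prop :=
  ∀ S : Set V, S.Finite →
    ∃ (m n : ℕ) (p : G.Walk (f m) (g n)), ∀ x ∈ p.support, x ∉ S

/-- The ends of `G`, as equivalence classes of rays. -/
def Ends {V : Type*} (G : SimpleGraph V) : Type _ :=
  Quot (fun f g : {f : ℕ → V // IsRay G f} => EndEquiv G f.1 g.1)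

/-- The edge cut `δ(X)`. -/
def edgeCut {V : Type*} (G : SimpleGraph V) (X : Set V) : Set (Sym2 V) :=
  {e | e ∈ G.edgeSet ∧ ∃ a b, e = s(a, b) ∧ a ∈ X ∧ b ∉ X}

/-- `G` has a Hamilton circle in its Freudenthal compactification `|G|`,
expressed combinatorially: there is a spanning edge set `C` in which every
vertex has degree exactly `2` and which meets every finite cut of `G` in a
positive even number of edges (for locally finite connected `G` this
characterises edge sets whose closure in `|G|` is a circle through all
vertices). -/
def HasHamiltonCircle {V : Type*} (G : SimpleGraph V) : Prop :=
  ∃ C ⊆ G.edgeSet, (∀ v : V, {e ∈ C | v ∈ e}.ncard = 2) ∧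
    ∀ X : Set V, X.Nonempty → Xᶜ.Nonempty → (edgeCut G X).Finite →
      (C ∩ edgeCut G X).Nonempty ∧ Even ((C ∩ edgeCut G X).ncard)

/-- The end represented by the ray `g` lies in the closure (in `|G|`) of the
vertex set `M`: for every finite `S`, the component of `G - S` containing a
tail of `g` meets `M`. -/
def EndInClosure {V : Type*} (G : SimpleGraph V) (g : ℕ → V) (M : Set V) : Prop :=
  ∀ S : Set V, S.Finite → ∃ u ∈ M, ∃ N : ℕ, ∀ n ≥ N,
    ∃ p : G.Walk u (g n), ∀ x ∈ p.support, x ∉ S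

/-- `S` is a vertex separator of `G`: `G - S` is disconnected. -/
def IsSeparator {V : Type*} (G : SimpleGraph V) (S : Set V) : Prop :=
  ∃ (u : V) (hu : u ∉ S) (v : V) (hv : v ∉ S),
    ¬ (G.induce {x | x ∉ S}).Reachable ⟨u, hu⟩ ⟨v, hv⟩

/-- `S` is a minimal vertex separator of `G`. -/
def IsMinSeparator {V : Type*} (G : SimpleGraph V) (S : Set V) : Prop :=
  IsSeparator G S ∧ ∀ T ⊂ S, ¬ IsSeparator G T

/-- The `k`-blow-up of `G`: each vertex is replaced by a `k`-clique. -/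
def blowup {V : Type*} (G : SimpleGraph V) (k : ℕ) : SimpleGraph (V × Fin k) where
  Adj x y := (x.1 = y.1 ∧ x.2 ≠ y.2) ∨ G.Adj x.1 y.1
  symm := by
    constructor
    rintro x y (⟨h1, h2⟩ | h)
    · exact Or.inl ⟨h1.symm, h2.symm⟩
    · exact Or.inr h.symm
  loopless := by
    constructor
    rintro x (⟨_, h⟩ | h)
    · exact h rfl
    · exact G.irrefl h

section

open SimpleGraph Walk

variable {V : Type*} {G : SimpleGraph V}

lemma HFree.claw_adj_of_not_adj (hclaw : HFree claw G) {u a b c : V}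
    (hua : G.Adj u a) (hub : G.Adj u b) (huc : G.Adj u c)
    (hab : a ≠ b) (hac : a ≠ c) (hbc : b ≠ c)
    (hnab : ¬ G.Adj a b) (hnac : ¬ G.Adj a c) : G.Adj b c := by
  by_contra hnbc
  refine hclaw ⟨⟨⟨![u, a, b, c], fun i j hij => ?_⟩, fun {i j} => ?_⟩⟩
  · fin_cases i <;> fin_cases j <;> simp_all [hua.ne, hub.ne, huc.ne]
  · show G.Adj (![u, a, b, c] i) (![u, a, b, c] j) ↔ _
    fin_cases i <;> fin_cases j <;> simp_all [claw, fromRel_adj, G.adj_comm]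

lemma HFree.paw_adj_or_adj (hpaw : HFree paw G) {u a b c : V}
    (hua : G.Adj u a) (hub : G.Adj u b) (huc : G.Adj u c) (hbc : G.Adj b c)
    (hab : a ≠ b) (hac : a ≠ c) : G.Adj a b ∨ G.Adj a c := by
  by_contra! h
  refine hpaw ⟨⟨⟨![a, u, b, c], fun i j hij => ?_⟩, fun {i j} => ?_⟩⟩
  · fin_cases i <;> fin_cases j <;> simp_all [hua.ne, hub.ne, huc.ne, hbc.ne]
  · show G.Adj (![a, u, b, c] i) (![a, u, b, c] j) ↔ _
    fin_cases i <;> fin_cases j <;> simp_all [paw, fromRel_adj, G.adj_comm]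

lemma SimpleGraph.reachable_deleteEdges_of_reachable_induce {v : V} {e : Sym2 V} (he : v ∈ e)
    {x y : {u | u ≠ v}} (h : (G.induce {u | u ≠ v}).Reachable x y) :
    (G.deleteEdges {e}).Reachable x y :=
  h.map ⟨Subtype.val, fun {a b} hab => (deleteEdges_adj ..).mpr
    ⟨hab, fun hab_e => by
      rcases Sym2.mem_iff.mp ((Set.mem_singleton_iff.mp hab_e) ▸ he) with h | h
      exacts [a.2 h.symm, b.2 h.symm]⟩⟩

lemma TwoConnected.not_isAcyclic (h2 : TwoConnected G) : ¬ G.IsAcyclic := by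
  obtain ⟨⟨a, b, c, hab, hac, hbc⟩, -, hdel⟩ := h2
  obtain ⟨p⟩ := (hdel c).preconnected ⟨a, hac⟩ ⟨b, hbc⟩
  obtain ⟨⟨a', ha'c⟩, haa'⟩ : ∃ a' : {u | u ≠ c}, G.Adj a a' :=
    ⟨p.snd, p.adj_snd (not_nil_of_ne (by simpa using hab))⟩
  have hreach : (G.deleteEdges {s(a, a')}).Reachable a a' :=
    (reachable_deleteEdges_of_reachable_induce (v := a') (Sym2.mem_mk_right _ _)
        ((hdel a').preconnected ⟨a, haa'.ne⟩ ⟨c, ha'c.symm⟩)).trans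
      (reachable_deleteEdges_of_reachable_induce (v := a) (Sym2.mem_mk_left _ _)
        ((hdel a).preconnected ⟨c, hac.symm⟩ ⟨a', haa'.ne'⟩))
  obtain ⟨_, cyc, hcyc, -⟩ := adj_and_reachable_delete_edges_iff_exists_cycle.mp ⟨haa', hreach⟩
  exact fun hG => hG cyc hcyc

lemma SimpleGraph.exists_isCycle_forall_isCycle_length_le_length [Finite G.edgeSet]
    (hG : ¬ G.IsAcyclic) :
    ∃ (u : V) (c : G.Walk u u), c.IsCycle ∧
      ∀ (u' : V) (c' : G.Walk u' u'), c'.IsCycle → c'.length ≤ c.length := by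
  have := Fintype.ofFinite G.edgeSet
  let s := {n | ∃ (u : V) (c : G.Walk u u), c.IsCycle ∧ c.length = n}
  have hs : s.Finite := (Set.finite_le_nat G.edgeFinset.card).subset
    fun n ⟨_, _, hc, hn⟩ => hn ▸ hc.isTrail.length_le_card_edgeFinset
  obtain ⟨u, c, hc⟩ : ∃ (u : V) (c : G.Walk u u), c.IsCycle := by
    simpa [IsAcyclic] using hG
  obtain ⟨_, ⟨⟨u, c, hc, rfl⟩, hmax⟩⟩ := hs.exists_maximal ⟨_, u, c, hc, rfl⟩
  exact ⟨u, c, hc, fun u' c' hc' =>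
    (le_total _ _).elim id (hmax ⟨u', c', hc', rfl⟩)⟩

namespace SimpleGraph.Walk

variable {u w : V} {c : G.Walk u u}

lemma IsCycle.exists_isCycle_length_succ_of_adj_snd (hc : c.IsCycle) (hw : w ∉ c.support)
    (hwu : G.Adj w u) (hwx : G.Adj w c.snd) :
    ∃ c' : G.Walk u u, c'.IsCycle ∧ c'.length = c.length + 1 := by
  cases c with
  | nil => exact absurd hc not_isCycle_nil
  | cons hux q =>
    rw [snd_cons] at hwx
    have hq : q.IsPath := ((cons_isCycle_iff q hux).mp hc).1
    have hwq : w ∉ q.support := fun h => hw (List.mem_cons_of_mem _ h)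
    refine ⟨cons hwu.symm (cons hwx q), (cons_isCycle_iff _ _).mpr ⟨hq.cons hwq, ?_⟩, rfl⟩
    rw [edges_cons, List.mem_cons, Sym2.eq_iff]
    rintro ((⟨h, -⟩ | ⟨h, -⟩) | h)
    · exact hwu.ne h.symm
    · exact hux.ne h
    · exact hwq (q.snd_mem_support_of_mem_edges h)

lemma IsCycle.not_adj_snd_of_forall_length_le (hc : c.IsCycle)
    (hmax : ∀ (u' : V) (c' : G.Walk u' u'), c'.IsCycle → c'.length ≤ c.length)
    (hw : w ∉ c.support) (hwu : G.Adj w u) : ¬ G.Adj w c.snd := fun hwx => by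
  obtain ⟨c', hc', hlen⟩ := hc.exists_isCycle_length_succ_of_adj_snd hw hwu hwx
  have := hmax u c' hc'
  omega

lemma IsCycle.not_adj_penultimate_of_forall_length_le (hc : c.IsCycle)
    (hmax : ∀ (u' : V) (c' : G.Walk u' u'), c'.IsCycle → c'.length ≤ c.length)
    (hw : w ∉ c.support) (hwu : G.Adj w u) : ¬ G.Adj w c.penultimate := by
  rw [← snd_reverse]
  exact hc.reverse.not_adj_snd_of_forall_length_le (by simpa using hmax) (by simpa using hw) hwu

lemma IsCycle.mem_support_of_forall_length_le [DecidableEq V] (hclaw : HFree claw G)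
    (hpaw : HFree paw G) (hconn : G.Connected) (hc : c.IsCycle)
    (hmax : ∀ (u' : V) (c' : G.Walk u' u'), c'.IsCycle → c'.length ≤ c.length) (v : V) :
    v ∈ c.support := by
  by_contra hv
  obtain ⟨⟨⟨x, w⟩, hxw⟩, -, hx, hw⟩ :=
    (hconn.preconnected u v).some.exists_boundary_dart {x | x ∈ c.support}
      c.start_mem_support hv
  let r := c.rotate x hx
  have hr : r.IsCycle := hc.rotate hx
  have hrmax : ∀ (u' : V) (c' : G.Walk u' u'), c'.IsCycle → c'.length ≤ r.length := by
    simpa [r] using hmax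
  have hwr : w ∉ r.support := by simpa [r, mem_support_rotate_iff] using hw
  have hxs : G.Adj x r.snd := r.adj_snd hr.not_nil
  have hxp : G.Adj x r.penultimate := (r.adj_penultimate hr.not_nil).symm
  have hws : w ≠ r.snd := fun h => hwr (h ▸ r.getVert_mem_support 1)
  have hwp : w ≠ r.penultimate := fun h => hwr (h ▸ r.getVert_mem_support _)
  have hnws := hr.not_adj_snd_of_forall_length_le hrmax hwr hxw.symm
  have hnwp := hr.not_adj_penultimate_of_forall_length_le hrmax hwr hxw.symm
  have hsp : G.Adj r.snd r.penultimate :=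
    hclaw.claw_adj_of_not_adj hxw hxs hxp hws hwp hr.snd_ne_penultimate hnws hnwp
  exact (hpaw.paw_adj_or_adj hxw hxs hxp hsp hws hwp).elim hnws hnwp

lemma IsCycle.isHamiltonianCycle_of_forall_mem_support [DecidableEq V] (hc : c.IsCycle)
    (h : ∀ v, v ∈ c.support) : c.IsHamiltonianCycle := by
  refine ⟨hc, hc.isPath_tail.isHamiltonian_of_mem fun v => ?_⟩
  rcases (cons_support_tail hc.not_nil ▸ h v : v ∈ u :: c.tail.support) with _ | ⟨_, hv⟩
  exacts [c.tail.end_mem_support, hv]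

end SimpleGraph.Walk

end

/-- Every finite 2-connected claw-free and paw-free graph is Hamiltonian. -/
theorem stmt_0 {V : Type} [Fintype V] [DecidableEq V] (G : SimpleGraph V)
    (h2 : TwoConnected G) (hclaw : HFree claw G) (hpaw : HFree paw G) :
    G.IsHamiltonian := by
  obtain ⟨u, c, hc, hmax⟩ := exists_isCycle_forall_isCycle_length_le_length h2.not_isAcyclic
  exact fun _ => ⟨u, c, hc.isHamiltonianCycle_of_forall_mem_support
    (hc.mem_support_of_forall_length_le hclaw hpaw h2.2.1 hmax)⟩
end

section
/- Let G be a connected claw-free graph, S a minimal vertex separator of G, s a vertex of S, and K a connected component of G - S. Then the set of neighbours of s lying in K induces a complete subgraph of G. -/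
open SimpleGraph

/- If `s` lay in a minimal separator `S` but had two non-adjacent neighbours `u, v` in one
component `K` of `G - S`, then, since `s` also has a neighbour `w` in some other component of
`G - S`, the vertices `s; u, v, w` would span a claw. -/

lemma claw_adj_iff (i j : Fin 4) : claw.Adj i j ↔ i ≠ j ∧ (i = 0 ∨ j = 0) := by
  simp [claw, fromRel_adj]

lemma adj_or_adj_or_adj_of_hFree_claw {V : Type*} {G : SimpleGraph V} (hclaw : HFree claw G)
    {c a b d : V} (ha : G.Adj c a) (hb : G.Adj c b) (hd : G.Adj c d)
    (hab : a ≠ b) (had : a ≠ d) (hbd : b ≠ d) :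
    G.Adj a b ∨ G.Adj a d ∨ G.Adj b d := by
  by_contra! h
  obtain ⟨h_ab, h_ad, h_bd⟩ := h
  have hinj : Function.Injective ![c, a, b, d] := by
    intro i j hij
    fin_cases i <;> fin_cases j <;>
      simp_all [ha.ne, hb.ne, hd.ne, ha.ne.symm, hb.ne.symm, hd.ne.symm]
  refine hclaw ⟨⟨⟨![c, a, b, d], hinj⟩, fun {i j} => ?_⟩⟩
  rw [claw_adj_iff]
  fin_cases i <;> fin_cases j <;>
    simp [ha, hb, hd, ha.symm, hb.symm, hd.symm, h_ab, h_ad, h_bd,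
      G.adj_comm b a, G.adj_comm d a, G.adj_comm d b]

section Separator

variable {V : Type*} {G : SimpleGraph V} {S : Set V}

lemma connectedComponentMk_induce_eq_of_adj {z w : V} (hz : z ∉ S) (hw : w ∉ S)
    (h : G.Adj z w) :
    (G.induce {x | x ∉ S}).connectedComponentMk ⟨z, hz⟩ =
      (G.induce {x | x ∉ S}).connectedComponentMk ⟨w, hw⟩ :=
  ConnectedComponent.connectedComponentMk_eq_of_adj h

lemma IsSeparator.exists_connectedComponentMk_ne (hS : IsSeparator G S)
    (K : (G.induce {x | x ∉ S}).ConnectedComponent) :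
    ∃ (y : V) (hy : y ∉ S), (G.induce {x | x ∉ S}).connectedComponentMk ⟨y, hy⟩ ≠ K := by
  obtain ⟨x, hx, y, hy, hxy⟩ := hS
  by_cases hxK : (G.induce {x | x ∉ S}).connectedComponentMk ⟨x, hx⟩ = K
  · exact ⟨y, hy, fun hyK => hxy (ConnectedComponent.eq.mp (hxK.trans hyK.symm))⟩
  · exact ⟨x, hx, hxK⟩

lemma IsMinSeparator.exists_adj_mem_component (hS : IsMinSeparator G S) {s : V} (hs : s ∈ S)
    (C : (G.induce {x | x ∉ S}).ConnectedComponent) :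
    ∃ (w : V) (hw : w ∉ S), G.Adj s w ∧
      (G.induce {x | x ∉ S}).connectedComponentMk ⟨w, hw⟩ = C := by
  obtain ⟨⟨x, hx⟩, hxC⟩ := C.nonempty_supp
  obtain ⟨y, hy, hyC⟩ := hS.1.exists_connectedComponentMk_ne C
  have hnot : ¬ IsSeparator G (S \ {s}) :=
    hS.2 _ (Set.sdiff_singleton_ssubset.mpr hs)
  simp only [IsSeparator, not_exists, not_not] at hnot
  obtain ⟨p⟩ := hnot x (fun h => hx h.1) y (fun h => hy h.1)
  -- A walk of `G - (S \ {s})` leaving `C` can only do so through `s`.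
  obtain ⟨d, -, ⟨hd, hdC⟩, hd_notC⟩ := p.exists_boundary_dart
    {z | ∃ hz : z.1 ∉ S, (G.induce {x | x ∉ S}).connectedComponentMk ⟨z.1, hz⟩ = C}
    ⟨hx, hxC⟩ (fun ⟨_, h⟩ => hyC h)
  have hadj : G.Adj d.fst.1 d.snd.1 := d.adj
  by_cases hsnd : d.snd.1 ∈ S
  · have hsnd_s : d.snd.1 = s := by
      by_contra h
      exact d.snd.2 ⟨hsnd, h⟩
    exact ⟨d.fst.1, hd, by simpa [hsnd_s] using hadj.symm, hdC⟩
  · refine absurd ⟨hsnd, ?_⟩ hd_notC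
    rw [← hdC]
    exact connectedComponentMk_induce_eq_of_adj hsnd hd hadj.symm

end Separator

theorem stmt_2_general {V : Type} (G : SimpleGraph V) (hclaw : HFree claw G)
    (S : Set V) (hS : IsMinSeparator G S) (s : V) (hs : s ∈ S)
    (K : (G.induce {x | x ∉ S}).ConnectedComponent) :
    ∀ u v : V, u ≠ v → G.Adj s u → G.Adj s v →
      (∃ hu : u ∉ S, (G.induce {x | x ∉ S}).connectedComponentMk ⟨u, hu⟩ = K) →
      (∃ hv : v ∉ S, (G.induce {x | x ∉ S}).connectedComponentMk ⟨v, hv⟩ = K) →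
      G.Adj u v := by
  rintro u v huv hsu hsv ⟨hu, huK⟩ ⟨hv, hvK⟩
  obtain ⟨y, hy, hyK⟩ := hS.1.exists_connectedComponentMk_ne K
  obtain ⟨w, hw, hsw, hwC⟩ := hS.exists_adj_mem_component hs
    ((G.induce {x | x ∉ S}).connectedComponentMk ⟨y, hy⟩)
  have hwK : (G.induce {x | x ∉ S}).connectedComponentMk ⟨w, hw⟩ ≠ K := hwC ▸ hyK
  have not_adj_w : ∀ z (hz : z ∉ S),
      (G.induce {x | x ∉ S}).connectedComponentMk ⟨z, hz⟩ = K → z ≠ w ∧ ¬ G.Adj z w := by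
    rintro z hz rfl
    exact ⟨by rintro rfl; exact hwK rfl,
      fun hzw => hwK (connectedComponentMk_induce_eq_of_adj hz hw hzw).symm⟩
  obtain ⟨huw, huw'⟩ := not_adj_w u hu huK
  obtain ⟨hvw, hvw'⟩ := not_adj_w v hv hvK
  simpa [huw', hvw'] using adj_or_adj_or_adj_of_hFree_claw hclaw hsu hsv hsw huv huw hvw

/-- for a minimal separator `S` of a connected claw-free graph, a vertex
`s ∈ S` and a component `K` of `G - S`, the neighbours of `s` in `K` induce a complete graph. -/
theorem stmt_2 {V : Type} (G : SimpleGraph V) (hconn : G.Connected) (hclaw : HFree claw G)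
    (S : Set V) (hS : IsMinSeparator G S) (s : V) (hs : s ∈ S)
    (K : (G.induce {x | x ∉ S}).ConnectedComponent) :
    ∀ u v : V, u ≠ v → G.Adj s u → G.Adj s v →
      (∃ hu : u ∉ S, (G.induce {x | x ∉ S}).connectedComponentMk ⟨u, hu⟩ = K) →
      (∃ hv : v ∉ S, (G.induce {x | x ∉ S}).connectedComponentMk ⟨v, hv⟩ = K) →
      G.Adj u v :=
  stmt_2_general G hclaw S hS s hs K
end

section
/- Let G be an infinite, locally finite, connected, claw-free graph, X a finite vertex set such that G[X] is connected, and 𝔖 ⊆ V(G) a finite vertex set, disjoint from X, that is minimal (under inclusion) with the property that every ray starting in X meets 𝔖. Then G − 𝔖 has exactly one finite component K₀; this component contains all of X, and every vertex of 𝔖 has a neighbour in K₀. -/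
open SimpleGraph

/-!
The component `K₀` of `G − 𝔖` containing the connected set `X` is finite: otherwise, by König's
lemma, it would contain a ray starting in `X` and avoiding `𝔖`. By minimality, each `s ∈ 𝔖` lies
on a ray from `X` that meets `𝔖` only in `s`; the segment before `s` lies in `K₀` and the tail
after `s` lies in an infinite component. So every `s ∈ 𝔖` has a neighbour in `K₀` and one in an
infinite component. A second finite component `K` would, as `G` is infinite and connected, send
an edge to some `s ∈ 𝔖`, and `s` together with its three neighbours in `K`, `K₀` and an infinite
component would induce a claw.
-/

lemma IsRay.of_induce {V : Type*} {G : SimpleGraph V} {A : Set V} {f : ℕ → A}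
    (hf : IsRay (G.induce A) f) : IsRay G fun n => (f n : V) :=
  ⟨Subtype.val_injective.comp hf.1, hf.2⟩

lemma IsRay.shift {V : Type*} {G : SimpleGraph V} {f : ℕ → V} (hf : IsRay G f) (k : ℕ) :
    IsRay G fun n => f (k + n) :=
  ⟨hf.1.comp (add_right_injective k), fun n => hf.2 (k + n)⟩

namespace SimpleGraph

variable {V : Type*} {G : SimpleGraph V}

variable (G) in
def avoidingReachSet (F : Set V) (v : V) : Set V :=
  {w | ∃ p : G.Walk v w, ∀ x ∈ p.support, x ∉ F}

lemma notMem_of_avoidingReachSet_nonempty {F : Set V} {v : V}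
    (h : (G.avoidingReachSet F v).Nonempty) : v ∉ F := by
  obtain ⟨w, p, hp⟩ := h
  exact hp v p.start_mem_support

lemma avoidingReachSet_subset (F : Set V) (v : V) :
    G.avoidingReachSet F v ⊆
      insert v (⋃ u ∈ G.neighborSet v \ F, G.avoidingReachSet (insert v F) u) := by
  classical
  rintro w ⟨p, hp⟩
  cases hq : p.toPath with
  | mk q hq_path =>
    have hqF : ∀ x ∈ q.support, x ∉ F := fun x hx =>
      hp x (p.support_toPath_subset_support (by rw [hq]; exact hx))
    cases q with
    | nil => exact Set.mem_insert _ _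
    | @cons _ u _ hvu r =>
      rw [Walk.cons_isPath_iff] at hq_path
      refine Set.mem_insert_of_mem _ (Set.mem_biUnion ⟨hvu, hqF u (by simp)⟩ ⟨r, ?_⟩)
      intro x hx hxvF
      rcases hxvF with rfl | hxF
      · exact hq_path.2 hx
      · exact hqF x (by simp [hx]) hxF

lemma exists_adj_avoidingReachSet_infinite (hlf : ∀ v, (G.neighborSet v).Finite) {F : Set V}
    {v : V} (h : (G.avoidingReachSet F v).Infinite) :
    ∃ u, G.Adj v u ∧ (G.avoidingReachSet (insert v F) u).Infinite := by
  by_contra! hfin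
  refine h (((((hlf v).sdiff).biUnion fun u hu => ?_).insert v).subset
    (avoidingReachSet_subset F v))
  exact hfin u hu.1

lemma exists_isRay_of_avoidingReachSet_infinite (hlf : ∀ v, (G.neighborSet v).Finite) {v : V}
    (h : (G.avoidingReachSet ∅ v).Infinite) : ∃ f, IsRay G f ∧ f 0 = v := by
  let State := {p : V × Set V // (G.avoidingReachSet p.2 p.1).Infinite}
  have step : ∀ s : State, ∃ t : State, G.Adj s.1.1 t.1.1 ∧ t.1.2 = insert s.1.1 s.1.2 := by
    rintro ⟨⟨v, F⟩, hinf⟩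
    obtain ⟨u, hvu, hu⟩ := exists_adj_avoidingReachSet_infinite hlf hinf
    exact ⟨⟨(u, insert v F), hu⟩, hvu, rfl⟩
  choose next hadj hnext using step
  let g : ℕ → State := fun n => next^[n] ⟨(v, ∅), h⟩
  have hg : ∀ n, g (n + 1) = next (g n) := fun n => Function.iterate_succ_apply' _ _ _
  have hforbid : ∀ n, (g (n + 1)).1.2 = insert (g n).1.1 (g n).1.2 := fun n => by
    rw [hg]; exact hnext _
  have hmono : Monotone fun n => (g n).1.2 :=
    monotone_nat_of_le_succ fun n => by rw [hforbid]; exact Set.subset_insert _ _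
  -- each vertex of the ray is forbidden from the next step on, but never at its own step
  have hinj : ∀ m n, m < n → (g m).1.1 ≠ (g n).1.1 := by
    intro m n hmn heq
    refine notMem_of_avoidingReachSet_nonempty (g n).2.nonempty (hmono hmn ?_)
    change (g n).1.1 ∈ (g (m + 1)).1.2
    rw [hforbid, ← heq]
    exact Set.mem_insert _ _
  refine ⟨fun n => (g n).1.1, ⟨Function.Injective.of_lt_imp_ne hinj, fun n => ?_⟩, rfl⟩
  change G.Adj (g n).1.1 (g (n + 1)).1.1
  rw [hg]
  exact hadj _

lemma exists_isRay_of_supp_infinite (hlf : ∀ v, (G.neighborSet v).Finite) {v : V}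
    (h : (G.connectedComponentMk v).supp.Infinite) : ∃ f, IsRay G f ∧ f 0 = v := by
  refine exists_isRay_of_avoidingReachSet_infinite hlf (h.mono fun w hw => ?_)
  obtain ⟨p⟩ := (ConnectedComponent.mem_supp_iff _ _ |>.mp hw |> ConnectedComponent.exact).symm
  exact ⟨p, fun _ _ => Set.notMem_empty _⟩

lemma neighborSet_induce_finite (hlf : ∀ v, (G.neighborSet v).Finite) (A : Set V) (v : A) :
    ((G.induce A).neighborSet v).Finite :=
  (hlf v).preimage Subtype.val_injective.injOn

lemma nonempty_claw_embedding {s a b c : V} (hsa : G.Adj s a) (hsb : G.Adj s b)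
    (hsc : G.Adj s c) (hab : a ≠ b ∧ ¬ G.Adj a b) (hac : a ≠ c ∧ ¬ G.Adj a c)
    (hbc : b ≠ c ∧ ¬ G.Adj b c) : Nonempty (claw ↪g G) := by
  refine ⟨⟨⟨![s, a, b, c], fun i j hij => ?_⟩, fun {i j} => ?_⟩⟩
  · fin_cases i <;> fin_cases j <;> simp_all [G.ne_of_adj, eq_comm]
  · change G.Adj (![s, a, b, c] i) (![s, a, b, c] j) ↔ claw.Adj i j
    fin_cases i <;> fin_cases j <;> simp_all [claw, fromRel_adj, adj_comm]

section Components

variable {A : Set V}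

lemma connectedComponentMk_induce_eq_of_chain {f : ℕ → V} (hf : ∀ n, G.Adj (f n) (f (n + 1)))
    {b : ℕ} (hA : ∀ i ≤ b, f i ∈ A) :
    (G.induce A).connectedComponentMk ⟨f b, hA b le_rfl⟩ =
      (G.induce A).connectedComponentMk ⟨f 0, hA 0 b.zero_le⟩ := by
  induction b with
  | zero => rfl
  | succ k ih =>
    rw [← ih fun i hi => hA i (hi.trans k.le_succ)]
    exact ConnectedComponent.sound (Adj.reachable (G := G.induce A) (hf k).symm)

lemma supp_infinite_of_isRay {f : ℕ → V} (hf : IsRay G f) (hA : ∀ n, f n ∈ A) :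
    ((G.induce A).connectedComponentMk ⟨f 0, hA 0⟩).supp.Infinite :=
  Set.infinite_of_injective_forall_mem (f := fun n => (⟨f n, hA n⟩ : A))
    (fun _ _ h => hf.1 (congrArg Subtype.val h))
    fun _ => connectedComponentMk_induce_eq_of_chain hf.2 fun i _ => hA i

lemma ne_and_not_adj_of_connectedComponentMk_ne {a b : A}
    (h : (G.induce A).connectedComponentMk a ≠ (G.induce A).connectedComponentMk b) :
    (a : V) ≠ b ∧ ¬ G.Adj a b :=
  ⟨fun hab => h (congrArg _ (Subtype.ext hab)),
    fun hadj => h (ConnectedComponent.sound (Adj.reachable (G := G.induce A) hadj))⟩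

lemma exists_adj_of_supp_finite [Infinite V] (hconn : G.Connected) {S : Set V} (hS : S.Finite)
    (K : (G.induce {x | x ∉ S}).ConnectedComponent) (hK : K.supp.Finite) :
    ∃ u ∈ K.supp, ∃ s ∈ S, G.Adj u s := by
  obtain ⟨v, hv⟩ := K.exists_rep
  obtain ⟨z, hz⟩ := ((hK.image Subtype.val).union hS).infinite_compl.nonempty
  obtain ⟨p⟩ := hconn.preconnected v z
  obtain ⟨d, -, ⟨u, hu, hud_fst⟩, hd⟩ := p.exists_boundary_dart (Subtype.val '' K.supp)
    ⟨v, hv, rfl⟩ fun h => hz (Or.inl h)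
  have hud : G.Adj u d.snd := hud_fst ▸ d.adj
  refine ⟨u, hu, d.snd, ?_, hud⟩
  by_contra hdS
  refine hd ⟨⟨d.snd, hdS⟩, ?_, rfl⟩
  rw [ConnectedComponent.mem_supp_iff] at hu ⊢
  rw [← hu]
  exact ConnectedComponent.sound (Adj.reachable (G := G.induce _) (v := ⟨d.snd, hdS⟩) hud).symm

lemma nonempty_claw_embedding_of_adj_components {s : V} {a b c : A} (hsa : G.Adj s a)
    (hsb : G.Adj s b) (hsc : G.Adj s c)
    (hab : (G.induce A).connectedComponentMk a ≠ (G.induce A).connectedComponentMk b)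
    (hac : (G.induce A).connectedComponentMk a ≠ (G.induce A).connectedComponentMk c)
    (hbc : (G.induce A).connectedComponentMk b ≠ (G.induce A).connectedComponentMk c) :
    Nonempty (claw ↪g G) :=
  nonempty_claw_embedding hsa hsb hsc (ne_and_not_adj_of_connectedComponentMk_ne hab)
    (ne_and_not_adj_of_connectedComponentMk_ne hac) (ne_and_not_adj_of_connectedComponentMk_ne hbc)

end Components

section Umbrella

variable {X S : Set V}

variable (G) in
/-- `S` meets every ray starting in `X`; an `X`-umbrella is a finite, inclusion-minimal such `S`. -/
def HitsRaysFrom (X S : Set V) : Prop :=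
  ∀ f : ℕ → V, IsRay G f → f 0 ∈ X → ∃ n, f n ∈ S

lemma supp_finite_of_hitsRaysFrom (hlf : ∀ v, (G.neighborSet v).Finite)
    (hS : G.HitsRaysFrom X S) {x : V} (hxX : x ∈ X) (hxS : x ∉ S) :
    ((G.induce {x | x ∉ S}).connectedComponentMk ⟨x, hxS⟩).supp.Finite := by
  by_contra hinf
  obtain ⟨f, hf, hf0⟩ :=
    exists_isRay_of_supp_infinite (neighborSet_induce_finite hlf _) (Set.not_finite.mp hinf)
  obtain ⟨n, hn⟩ := hS _ hf.of_induce (by simpa [hf0] using hxX)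
  exact (f n).2 hn

lemma exists_isRay_hits_only_at (hS : G.HitsRaysFrom X S) {s : V}
    (hmin : ¬ G.HitsRaysFrom X (S \ {s})) :
    ∃ f n, IsRay G f ∧ f 0 ∈ X ∧ f n = s ∧ ∀ m, f m ∈ S ↔ m = n := by
  simp only [HitsRaysFrom, not_forall, not_exists] at hmin
  obtain ⟨f, hf, hf0, hfS⟩ := hmin
  obtain ⟨n, hn⟩ := hS f hf hf0
  have hfs : ∀ m, f m ∈ S → f m = s := fun m hm => by_contra fun h => hfS m ⟨hm, h⟩
  refine ⟨f, n, hf, hf0, hfs n hn, fun m => ⟨fun hm => hf.1 ?_, fun h => h ▸ hn⟩⟩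
  rw [hfs m hm, hfs n hn]

lemma exists_adj_connectedComponentMk_eq (hdisj : Disjoint X S) (hS : G.HitsRaysFrom X S)
    {s : V} (hmin : ¬ G.HitsRaysFrom X (S \ {s}))
    {K : (G.induce {x | x ∉ S}).ConnectedComponent}
    (hXK : ∀ x ∈ X, ∀ hx : x ∉ S, (G.induce {x | x ∉ S}).connectedComponentMk ⟨x, hx⟩ = K) :
    ∃ b, G.Adj s b ∧ ∃ hb : b ∉ S, (G.induce {x | x ∉ S}).connectedComponentMk ⟨b, hb⟩ = K := by
  obtain ⟨f, n, hf, hf0, rfl, hfS⟩ := exists_isRay_hits_only_at hS hmin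
  obtain ⟨k, rfl⟩ : ∃ k, n = k + 1 :=
    Nat.exists_eq_add_one.mpr (Nat.pos_of_ne_zero fun h =>
      Set.disjoint_left.mp hdisj hf0 ((hfS 0).mpr h.symm))
  have hA : ∀ i ≤ k, f i ∉ S := fun i hi h => by have := (hfS i).mp h; omega
  refine ⟨f k, (hf.2 k).symm, hA k le_rfl, ?_⟩
  rw [connectedComponentMk_induce_eq_of_chain hf.2 hA]
  exact hXK _ hf0 _

lemma exists_adj_supp_infinite (hS : G.HitsRaysFrom X S) {s : V}
    (hmin : ¬ G.HitsRaysFrom X (S \ {s})) :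
    ∃ c, G.Adj s c ∧ ∃ hc : c ∉ S,
      ((G.induce {x | x ∉ S}).connectedComponentMk ⟨c, hc⟩).supp.Infinite := by
  obtain ⟨f, n, hf, -, rfl, hfS⟩ := exists_isRay_hits_only_at hS hmin
  have hA : ∀ m, f (n + 1 + m) ∉ S := fun m h => by have := (hfS _).mp h; omega
  exact ⟨f (n + 1), hf.2 n, hA 0, supp_infinite_of_isRay (hf.shift (n + 1)) hA⟩

end Umbrella

end SimpleGraph

theorem stmt_11_general {V : Type} [Infinite V] (G : SimpleGraph V)
    (hlf : ∀ v : V, (G.neighborSet v).Finite) (hconn : G.Connected)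
    (hclaw : HFree claw G) (X : Set V) (hXne : X.Nonempty)
    (hXconn : (G.induce X).Connected) (𝔖 : Set V) (h𝔖fin : 𝔖.Finite)
    (hdisj : Disjoint X 𝔖)
    (hmeets : ∀ f : ℕ → V, IsRay G f → f 0 ∈ X → ∃ n, f n ∈ 𝔖)
    (hmin : ∀ T ⊂ 𝔖, ¬ ∀ f : ℕ → V, IsRay G f → f 0 ∈ X → ∃ n, f n ∈ T) :
    ∃ K₀ : (G.induce {x | x ∉ 𝔖}).ConnectedComponent,
      K₀.supp.Finite ∧
      (∀ K : (G.induce {x | x ∉ 𝔖}).ConnectedComponent, K.supp.Finite → K = K₀) ∧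
      (∀ x ∈ X, ∃ hx : x ∉ 𝔖,
        (G.induce {x | x ∉ 𝔖}).connectedComponentMk ⟨x, hx⟩ = K₀) ∧
      (∀ s ∈ 𝔖, ∃ y, G.Adj s y ∧ ∃ hy : y ∉ 𝔖,
        (G.induce {x | x ∉ 𝔖}).connectedComponentMk ⟨y, hy⟩ = K₀) := by
  obtain ⟨x₀, hx₀⟩ := hXne
  have hX𝔖 : ∀ x ∈ X, x ∉ 𝔖 := fun _ hx => Set.disjoint_left.mp hdisj hx
  set K₀ := (G.induce {x | x ∉ 𝔖}).connectedComponentMk ⟨x₀, hX𝔖 x₀ hx₀⟩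
  have hXK₀ : ∀ x ∈ X, ∀ hx : x ∉ 𝔖, (G.induce {x | x ∉ 𝔖}).connectedComponentMk ⟨x, hx⟩ = K₀ :=
    fun x hx _ => ConnectedComponent.sound <|
      (hXconn.preconnected ⟨x, hx⟩ ⟨x₀, hx₀⟩).map (G.induceHomOfLE hX𝔖).toHom
  have hK₀ : K₀.supp.Finite := supp_finite_of_hitsRaysFrom hlf hmeets hx₀ _
  have hmin' : ∀ s ∈ 𝔖, ¬ G.HitsRaysFrom X (𝔖 \ {s}) :=
    fun s hs => hmin _ (Set.sdiff_singleton_ssubset.mpr hs)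
  refine ⟨K₀, hK₀, fun K hK => ?_, fun x hx => ⟨hX𝔖 x hx, hXK₀ x hx _⟩,
    fun s hs => exists_adj_connectedComponentMk_eq hdisj hmeets (hmin' s hs) hXK₀⟩
  by_contra hne
  obtain ⟨u, hu, s, hs, hus⟩ := exists_adj_of_supp_finite hconn h𝔖fin K hK
  obtain ⟨b, hsb, hb, hbK₀⟩ := exists_adj_connectedComponentMk_eq hdisj hmeets (hmin' s hs) hXK₀
  obtain ⟨c, hsc, hc, hcinf⟩ := exists_adj_supp_infinite hmeets (hmin' s hs)
  rw [ConnectedComponent.mem_supp_iff] at hu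
  refine hclaw (nonempty_claw_embedding_of_adj_components (a := u) (b := ⟨b, hb⟩) (c := ⟨c, hc⟩)
    hus.symm hsb hsc ?_ ?_ ?_)
  · rwa [hu, hbK₀]
  · rw [hu]; exact fun h => hcinf (h ▸ hK)
  · rw [hbK₀]; exact fun h => hcinf (h ▸ hK₀)

/-- if `𝔖` is an `X`-umbrella (a finite set disjoint from the finite
connected set `X`, minimal such that every ray starting in `X` meets it), then `G − 𝔖`
has exactly one finite component `K₀`; `K₀` contains `X` and every vertex of `𝔖` has a
neighbour in `K₀`. -/
theorem stmt_11 {V : Type} [Infinite V] (G : SimpleGraph V)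
    (hlf : ∀ v : V, (G.neighborSet v).Finite) (hconn : G.Connected)
    (hclaw : HFree claw G) (X : Set V) (hX : X.Finite) (hXne : X.Nonempty)
    (hXconn : (G.induce X).Connected) (𝔖 : Set V) (h𝔖fin : 𝔖.Finite)
    (hdisj : Disjoint X 𝔖)
    (hmeets : ∀ f : ℕ → V, IsRay G f → f 0 ∈ X → ∃ n, f n ∈ 𝔖)
    (hmin : ∀ T ⊂ 𝔖, ¬ ∀ f : ℕ → V, IsRay G f → f 0 ∈ X → ∃ n, f n ∈ T) :
    ∃ K₀ : (G.induce {x | x ∉ 𝔖}).ConnectedComponent,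
      K₀.supp.Finite ∧
      (∀ K : (G.induce {x | x ∉ 𝔖}).ConnectedComponent, K.supp.Finite → K = K₀) ∧
      (∀ x ∈ X, ∃ hx : x ∉ 𝔖,
        (G.induce {x | x ∉ 𝔖}).connectedComponentMk ⟨x, hx⟩ = K₀) ∧
      (∀ s ∈ 𝔖, ∃ y, G.Adj s y ∧ ∃ hy : y ∉ 𝔖,
        (G.induce {x | x ∉ 𝔖}).connectedComponentMk ⟨y, hy⟩ = K₀) :=
  stmt_11_general G hlf hconn hclaw X hXne hXconn 𝔖 h𝔖fin hdisj hmeets hmin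
end
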